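/- With m = 2, let a, b, x, c ∈ 𝒯 be the finite trees whose vertex sets are, respectively, {1,11,111,12}, {1,11,12,121}, {1,11,12}, and {1,11,111,112,12,121,122}. Equip 𝒯 with the metric d(x,y) = Σ_{v∈Ṽ} φ(v)|x(v) − y(v)| where φ(v) depends only on gen(v) and φ(v) = α > 0 whenever gen(v) = 3. Then d(a,x) = d(x,b) = α, d(a,b) = 2α (so x lies on a geodesic from a to b: d(a,b) = d(a,x) + d(x,b)), d(a,c) = d(b,c) = 3α, and d(x,c) = 4α; in particular d(x,c)^2 = 16α^2 > 8α^2 = d(a,c)^2 − (d(a,b)/2)^2, so the CAT(0) comparison inequality fails for these four points (the distance from x to c strictly exceeds the distance from the midpoint of the comparison segment to the comparison point in the Euclidean plane). -/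
import Mathlib


/-- Vertices for m = 2: the vertex 1v₂…v_k is encoded as the list [v₂−1,…,v_k−1]
over `Fin 2`, so e.g. 1 = [], 11 = [0], 12 = [1], 111 = [0,0], 121 = [1,0]. -/
abbrev Vtx2 := List (Fin 2)

def IsTree (x : Vtx2 → Bool) : Prop :=
  ∀ (v : Vtx2) (a : Fin 2), x (v ++ [a]) = true → x v = true

noncomputable def treeDist (φ : Vtx2 → ℝ) (x y : Vtx2 → Bool) : ℝ :=
  ∑' v : Vtx2, φ v * |(if x v then (1 : ℝ) else 0) - (if y v then (1 : ℝ) else 0)|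

/-- The tree a with vertex set {1, 11, 111, 12}. -/
def tA : Vtx2 → Bool := fun v => decide (v ∈ ([[], [0], [0, 0], [1]] : List Vtx2))

/-- The tree b with vertex set {1, 11, 12, 121}. -/
def tB : Vtx2 → Bool := fun v => decide (v ∈ ([[], [0], [1], [1, 0]] : List Vtx2))

/-- The tree x with vertex set {1, 11, 12}. -/
def tX : Vtx2 → Bool := fun v => decide (v ∈ ([[], [0], [1]] : List Vtx2))

/-- The tree c with vertex set {1, 11, 111, 112, 12, 121, 122}. -/
def tC : Vtx2 → Bool := fun v =>
  decide (v ∈ ([[], [0], [0, 0], [0, 1], [1], [1, 0], [1, 1]] : List Vtx2))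

def S7 : Finset Vtx2 := {[], [0], [1], [0,0], [0,1], [1,0], [1,1]}

lemma treeDist_eq_sum (φ : Vtx2 → ℝ) (x y : Vtx2 → Bool) (h : ∀ v ∉ S7, x v = y v) :
    treeDist φ x y =
      ∑ v ∈ S7, φ v * |(if x v then (1 : ℝ) else 0) - (if y v then (1 : ℝ) else 0)| := by
  refine tsum_eq_sum fun v hv => ?_
  rw [h v hv]; simp

lemma isTree_of (L : List Vtx2) (hL : ∀ l ∈ L, l.dropLast ∈ L) :
    IsTree (fun v => decide (v ∈ L)) := by
  intro v a h
  simp only [decide_eq_true_eq] at h ⊢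
  have := hL _ h
  rwa [List.dropLast_concat] at this

/-- With m = 2 and a metric d(x,y) = Σ_v φ(v)|x(v)−y(v)| in which φ depends only on
the generation and equals α on generation 3, the four trees a,b,x,c above satisfy
d(a,x) = d(x,b) = α, d(a,b) = 2α (so x lies on a geodesic from a to b),
d(a,c) = d(b,c) = 3α and d(x,c) = 4α; hence d(x,c)² = 16α² > 8α² = d(a,c)² − (d(a,b)/2)²,
so the CAT(0) comparison inequality fails for these four points. -/
theorem tree_space_not_CAT0 (φ : Vtx2 → ℝ)
    (hφpos : ∀ v, 0 < φ v) (hφ : Summable φ)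
    (hφgen : ∀ v w : Vtx2, v.length = w.length → φ v = φ w)
    (α : ℝ) (hα : ∀ v : Vtx2, v.length + 1 = 3 → φ v = α) :
    IsTree tA ∧ IsTree tB ∧ IsTree tX ∧ IsTree tC ∧
    treeDist φ tA tX = α ∧ treeDist φ tX tB = α ∧
    treeDist φ tA tB = 2 * α ∧
    treeDist φ tA tB = treeDist φ tA tX + treeDist φ tX tB ∧
    treeDist φ tA tC = 3 * α ∧ treeDist φ tB tC = 3 * α ∧
    treeDist φ tX tC = 4 * α ∧
    treeDist φ tX tC ^ 2 = 16 * α ^ 2 ∧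
    treeDist φ tA tC ^ 2 - (treeDist φ tA tB / 2) ^ 2 = 8 * α ^ 2 ∧
    treeDist φ tA tC ^ 2 - (treeDist φ tA tB / 2) ^ 2 < treeDist φ tX tC ^ 2 := by
  have e00 := hα [0,0] rfl
  have e01 := hα [0,1] rfl
  have e10 := hα [1,0] rfl
  have e11 := hα [1,1] rfl
  have hα0 : 0 < α := e00 ▸ hφpos [0,0]
  have dax : treeDist φ tA tX = α := by
    rw [treeDist_eq_sum φ _ _ (by
      intro v hv; simp [S7] at hv
      obtain ⟨h1, h2, h3, h4, h5, h6, h7⟩ := hv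
      simp [tA, tX, h1, h2, h3, h4, h5, h6, h7])]
    simp [S7, Finset.sum_insert, tA, tX]
    linarith
  have dxb : treeDist φ tX tB = α := by
    rw [treeDist_eq_sum φ _ _ (by
      intro v hv; simp [S7] at hv
      obtain ⟨h1, h2, h3, h4, h5, h6, h7⟩ := hv
      simp [tB, tX, h1, h2, h3, h4, h5, h6, h7])]
    simp [S7, Finset.sum_insert, tB, tX]
    linarith
  have dab : treeDist φ tA tB = 2 * α := by
    rw [treeDist_eq_sum φ _ _ (by
      intro v hv; simp [S7] at hv
      obtain ⟨h1, h2, h3, h4, h5, h6, h7⟩ := hv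
      simp [tA, tB, h1, h2, h3, h4, h5, h6, h7])]
    simp [S7, Finset.sum_insert, tA, tB]
    linarith
  have dac : treeDist φ tA tC = 3 * α := by
    rw [treeDist_eq_sum φ _ _ (by
      intro v hv; simp [S7] at hv
      obtain ⟨h1, h2, h3, h4, h5, h6, h7⟩ := hv
      simp [tA, tC, h1, h2, h3, h4, h5, h6, h7])]
    simp [S7, Finset.sum_insert, tA, tC]
    linarith
  have dbc : treeDist φ tB tC = 3 * α := by
    rw [treeDist_eq_sum φ _ _ (by
      intro v hv; simp [S7] at hv
      obtain ⟨h1, h2, h3, h4, h5, h6, h7⟩ := hv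
      simp [tB, tC, h1, h2, h3, h4, h5, h6, h7])]
    simp [S7, Finset.sum_insert, tB, tC]
    linarith
  have dxc : treeDist φ tX tC = 4 * α := by
    rw [treeDist_eq_sum φ _ _ (by
      intro v hv; simp [S7] at hv
      obtain ⟨h1, h2, h3, h4, h5, h6, h7⟩ := hv
      simp [tX, tC, h1, h2, h3, h4, h5, h6, h7])]
    simp [S7, Finset.sum_insert, tX, tC]
    linarith
  refine ⟨isTree_of _ (by decide), isTree_of _ (by decide), isTree_of _ (by decide),
    isTree_of _ (by decide), dax, dxb, dab, by rw [dab, dax, dxb]; ring,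
    dac, dbc, dxc, by rw [dxc]; ring, by rw [dac, dab]; ring, ?_⟩
  rw [dac, dab, dxc]
  nlinarith [sq_nonneg α]
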